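/- Let 0 < R ≤ 1, M ≥ 0, σ > 0, 1 ≤ p < ∞, and let ρ_r be an even 2-periodic probability density. Then the operator T is Lipschitz continuous in the L^p([0,1]) norm on the set of even 2-periodic probability densities: for all even 2-periodic probability densities ρ₁, ρ₂ (with finite L^p([0,1]) norms), ( ∫₀¹ |(T ρ₂)(x) − (T ρ₁)(x)|^p dx )^{1/p} ≤ L_T · ( ∫₀¹ |ρ₂(x) − ρ₁(x)|^p dx )^{1/p}, where L_T = (1/2) · exp( (8R(1+M)/σ²)(1 − 1/p) ) · ( exp(16R/σ²) − 1 ). -/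

import Mathlib

open MeasureTheory Real

/-- The influence field `G_ρ(x) = ∫_{x-R}^{x+R} (x-y)(ρ(y) + M ρ_r(y)) dy`. -/
noncomputable def G (R M : ℝ) (ρ ρr : ℝ → ℝ) (x : ℝ) : ℝ :=
  ∫ y in (x - R)..(x + R), (x - y) * (ρ y + M * ρr y)

/-- `f` is an even 2-periodic probability density. -/
def IsEvenPeriodicDensity (f : ℝ → ℝ) : Prop :=
  (∀ x, f (x + 2) = f x) ∧ (∀ x, f (-x) = f x) ∧ (∀ x, 0 ≤ f x) ∧
    (∫ x in (0:ℝ)..1, f x) = 1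

/-- The operator `T`: `(T ρ)(x) = K⁻¹ exp(−(2/σ²) ∫₀ˣ G_ρ(z) dz)` with normalizing
constant `K = ∫₀¹ exp(−(2/σ²) ∫₀ˣ G_ρ(z) dz) dx`. -/
noncomputable def Tmap (R M σ : ℝ) (ρr ρ : ℝ → ℝ) (x : ℝ) : ℝ :=
  Real.exp (-(2 / σ ^ 2) * ∫ z in (0:ℝ)..x, G R M ρ ρr z) /
    ∫ y in (0:ℝ)..1, Real.exp (-(2 / σ ^ 2) * ∫ z in (0:ℝ)..y, G R M ρ ρr z)

open Set

lemma periodic_intervalIntegrable {f : ℝ → ℝ} (hper : Function.Periodic f 2)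
    (h11 : IntervalIntegrable f volume (-1) 1) :
    ∀ a b : ℝ, IntervalIntegrable f volume a b := by
  have key : ∀ k : ℤ, IntervalIntegrable f volume (-1 + k * 2) (1 + k * 2) := by
    intro k
    have h := h11.comp_sub_right ((k : ℝ) * 2)
    have e : (fun x => f (x - (k : ℝ) * 2)) = f := by
      funext x
      have := (hper.zsmul k).sub_eq x
      simpa [zsmul_eq_mul] using this
    rwa [e] at h
  have chain : ∀ (N : ℕ) (m : ℤ),
      IntervalIntegrable f volume (-1 + m * 2) (1 + (m + N) * 2) := by
    intro N
    induction N with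
    | zero => intro m; simpa using key m
    | succ n ih =>
      intro m
      have h1 := ih m
      have h2 := key (m + n + 1)
      have e : (-1 : ℝ) + (↑(m + n + 1)) * 2 = 1 + (↑m + (n : ℝ)) * 2 := by push_cast; ring
      rw [e] at h2
      have h3 := h1.trans h2
      have e2 : (1 : ℝ) + (↑(m + n + 1)) * 2 = 1 + ((m : ℝ) + ((n + 1 : ℕ) : ℝ)) * 2 := by
        push_cast; ring
      rwa [e2] at h3
  have main : ∀ a b : ℝ, a ≤ b → IntervalIntegrable f volume a b := by
    intro a b hab
    obtain ⟨m, hm⟩ := exists_int_le ((a + 1) / 2)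
    have hma : (-1 : ℝ) + m * 2 ≤ a := by linarith
    obtain ⟨N, hN⟩ := exists_nat_ge ((b - 1 - m * 2) / 2)
    have hNb : b ≤ 1 + ((m : ℝ) + N) * 2 := by linarith
    have H := chain N m
    apply H.mono_set
    rw [Set.uIcc_of_le hab, Set.uIcc_of_le (by linarith)]
    exact Set.Icc_subset_Icc hma hNb
  intro a b
  rcases le_total a b with hab | hab
  · exact main a b hab
  · exact (main b a hab).symm

lemma epd_intervalIntegrable {f : ℝ → ℝ} (hf : IsEvenPeriodicDensity f) :
    ∀ a b : ℝ, IntervalIntegrable f volume a b := by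
  obtain ⟨hper, heven, hpos, hint⟩ := hf
  have h01 : IntervalIntegrable f volume 0 1 := by
    by_contra h
    rw [intervalIntegral.integral_undef h] at hint
    norm_num at hint
  have hneg : IntervalIntegrable f volume (-1) 0 := by
    have h2 : IntervalIntegrable (fun x => f (-x)) volume (-0 : ℝ) (-1 : ℝ) :=
      (IntervalIntegrable.iff_comp_neg (a := 0) (b := 1)).mp h01
    have e : (fun x => f (-x)) = f := funext heven
    rw [e] at h2
    simpa using h2.symm
  exact periodic_intervalIntegrable hper (hneg.trans h01)

lemma even_periodic_integral_le {g : ℝ → ℝ} (hper : Function.Periodic g 2)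
    (heven : ∀ x, g (-x) = g x) (hpos : ∀ x, 0 ≤ g x)
    (hint : ∀ a b : ℝ, IntervalIntegrable g volume a b) {a b : ℝ} (hab : a ≤ b)
    (hlen : b - a ≤ 2) :
    (∫ x in a..b, g x) ≤ 2 * ∫ x in (0:ℝ)..1, g x := by
  have h1 : (∫ x in a..b, g x) ≤ ∫ x in a..(a+2), g x :=
    intervalIntegral.integral_mono_interval le_rfl hab (by linarith)
      (Filter.Eventually.of_forall hpos) (hint a (a+2))
  have h2 : (∫ x in a..(a+2), g x) = ∫ x in (-1:ℝ)..(1:ℝ), g x := by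
    have h := hper.intervalIntegral_add_eq a (-1)
    norm_num at h
    exact h
  have h3 : (∫ x in (-1:ℝ)..(0:ℝ), g x) = ∫ x in (0:ℝ)..1, g x := by
    have h := intervalIntegral.integral_comp_neg (a := (0:ℝ)) (b := 1) (f := g)
    simp only [heven, neg_zero] at h
    exact h.symm
  have h4 : (∫ x in (-1:ℝ)..(1:ℝ), g x) = (∫ x in (-1:ℝ)..(0:ℝ), g x) + ∫ x in (0:ℝ)..1, g x :=
    (intervalIntegral.integral_add_adjacent_intervals (hint _ _) (hint _ _)).symm
  linarith

lemma abs_kernel_integral_le {q : ℝ → ℝ} {R : ℝ} (hR : 0 ≤ R) (z : ℝ)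
    (hq : ∀ a b : ℝ, IntervalIntegrable q volume a b) :
    |∫ y in (z-R)..(z+R), (z - y) * q y| ≤ R * ∫ y in (z-R)..(z+R), |q y| := by
  have hab : z - R ≤ z + R := by linarith
  have h1 : |∫ y in (z-R)..(z+R), (z - y) * q y| ≤ ∫ y in (z-R)..(z+R), |(z - y) * q y| :=
    intervalIntegral.abs_integral_le_integral_abs hab
  have hiq : IntervalIntegrable (fun y => |(z - y) * q y|) volume (z-R) (z+R) :=
    ((hq _ _).continuousOn_mul ((continuous_const.sub continuous_id).continuousOn)).abs
  have h2 : (∫ y in (z-R)..(z+R), |(z - y) * q y|) ≤ ∫ y in (z-R)..(z+R), R * |q y| := by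
    apply intervalIntegral.integral_mono_on hab hiq (((hq _ _).abs).const_mul R)
    intro y hy
    rw [abs_mul]
    apply mul_le_mul_of_nonneg_right _ (abs_nonneg _)
    rw [abs_le]
    exact ⟨by linarith [hy.1, hy.2], by linarith [hy.1, hy.2]⟩
  rw [intervalIntegral.integral_const_mul] at h2
  linarith

lemma G_eq (R M : ℝ) (ρ ρr : ℝ → ℝ)
    (hint : ∀ a b : ℝ, IntervalIntegrable (fun y => ρ y + M * ρr y) volume a b) (z : ℝ) :
    G R M ρ ρr z =
      z * ((∫ t in (0:ℝ)..(z+R), (ρ t + M * ρr t)) - ∫ t in (0:ℝ)..(z-R), (ρ t + M * ρr t))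
        - ((∫ t in (0:ℝ)..(z+R), t * (ρ t + M * ρr t))
            - ∫ t in (0:ℝ)..(z-R), t * (ρ t + M * ρr t)) := by
  have h2 : ∀ a b : ℝ, IntervalIntegrable (fun y => y * (ρ y + M * ρr y)) volume a b :=
    fun a b => (hint a b).continuousOn_mul continuous_id.continuousOn
  unfold G
  have e1 : (∫ y in (z-R)..(z+R), (z - y) * (ρ y + M * ρr y))
      = (∫ y in (z-R)..(z+R), z * (ρ y + M * ρr y))
        - ∫ y in (z-R)..(z+R), y * (ρ y + M * ρr y) := by
    rw [← intervalIntegral.integral_sub ((hint _ _).const_mul z) (h2 _ _)]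
    congr 1
    funext y
    ring
  rw [e1, intervalIntegral.integral_const_mul,
    intervalIntegral.integral_interval_sub_left (hint 0 (z+R)) (hint 0 (z-R)),
    intervalIntegral.integral_interval_sub_left (h2 0 (z+R)) (h2 0 (z-R))]

lemma G_continuous (R M : ℝ) (ρ ρr : ℝ → ℝ)
    (hint : ∀ a b : ℝ, IntervalIntegrable (fun y => ρ y + M * ρr y) volume a b) :
    Continuous (G R M ρ ρr) := by
  have h2 : ∀ a b : ℝ, IntervalIntegrable (fun y => y * (ρ y + M * ρr y)) volume a b :=
    fun a b => (hint a b).continuousOn_mul continuous_id.continuousOn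
  have hc1 := intervalIntegral.continuous_primitive hint 0
  have hc2 := intervalIntegral.continuous_primitive h2 0
  have cp : Continuous fun z : ℝ => z + R := continuous_id.add continuous_const
  have cm : Continuous fun z : ℝ => z - R := continuous_id.sub continuous_const
  have hc : Continuous fun z : ℝ =>
      z * ((∫ t in (0:ℝ)..(z+R), (ρ t + M * ρr t)) - ∫ t in (0:ℝ)..(z-R), (ρ t + M * ρr t))
        - ((∫ t in (0:ℝ)..(z+R), t * (ρ t + M * ρr t))
            - ∫ t in (0:ℝ)..(z-R), t * (ρ t + M * ρr t)) :=
    (continuous_id.mul ((hc1.comp cp).sub (hc1.comp cm))).sub ((hc2.comp cp).sub (hc2.comp cm))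
  exact hc.congr fun z => (G_eq R M ρ ρr hint z).symm

lemma G_abs_le {R M : ℝ} (hR : 0 < R) (hR1 : R ≤ 1) (hM : 0 ≤ M) {ρ ρr : ℝ → ℝ}
    (hρ : IsEvenPeriodicDensity ρ) (hρr : IsEvenPeriodicDensity ρr) (z : ℝ) :
    |G R M ρ ρr z| ≤ 2 * R * (1 + M) := by
  obtain ⟨hper, hev, hpos, hint⟩ := id hρ
  obtain ⟨hperr, hevr, hposr, hintr⟩ := id hρr
  have hIρ := epd_intervalIntegrable hρ
  have hIr := epd_intervalIntegrable hρr
  have hIh : ∀ a b : ℝ, IntervalIntegrable (fun y => ρ y + M * ρr y) volume a b :=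
    fun a b => (hIρ a b).add ((hIr a b).const_mul M)
  have h1 : |G R M ρ ρr z| ≤ R * ∫ y in (z-R)..(z+R), |ρ y + M * ρr y| :=
    abs_kernel_integral_le hR.le z hIh
  have habs : (fun y => |ρ y + M * ρr y|) = fun y => ρ y + M * ρr y := by
    funext y
    exact abs_of_nonneg (add_nonneg (hpos y) (mul_nonneg hM (hposr y)))
  rw [habs] at h1
  have h2 : (∫ y in (z-R)..(z+R), (ρ y + M * ρr y)) ≤ 2 * ∫ x in (0:ℝ)..1, (ρ x + M * ρr x) := by
    apply even_periodic_integral_le _ _ _ hIh (by linarith) (by linarith)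
    · intro x; simp only [hper x, hperr x]
    · intro x; simp only [hev x, hevr x]
    · intro x; exact add_nonneg (hpos x) (mul_nonneg hM (hposr x))
  have h3 : (∫ x in (0:ℝ)..1, (ρ x + M * ρr x)) = 1 + M := by
    rw [intervalIntegral.integral_add (hIρ 0 1) ((hIr 0 1).const_mul M),
      intervalIntegral.integral_const_mul, hint, hintr]
    ring
  rw [h3] at h2
  calc |G R M ρ ρr z| ≤ R * ∫ y in (z-R)..(z+R), (ρ y + M * ρr y) := h1
    _ ≤ R * (2 * (1 + M)) := mul_le_mul_of_nonneg_left h2 hR.le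
    _ = 2 * R * (1 + M) := by ring

lemma G_sub_abs_le {R M : ℝ} (hR : 0 < R) (hR1 : R ≤ 1) {ρ₁ ρ₂ ρr : ℝ → ℝ}
    (hρ₁ : IsEvenPeriodicDensity ρ₁) (hρ₂ : IsEvenPeriodicDensity ρ₂)
    (hρr : IsEvenPeriodicDensity ρr) (z : ℝ) :
    |G R M ρ₂ ρr z - G R M ρ₁ ρr z| ≤ 2 * R * ∫ x in (0:ℝ)..1, |ρ₂ x - ρ₁ x| := by
  have hI1 := epd_intervalIntegrable hρ₁
  have hI2 := epd_intervalIntegrable hρ₂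
  have hIr := epd_intervalIntegrable hρr
  have hIδ : ∀ a b : ℝ, IntervalIntegrable (fun y => ρ₂ y - ρ₁ y) volume a b :=
    fun a b => (hI2 a b).sub (hI1 a b)
  have hsub : G R M ρ₂ ρr z - G R M ρ₁ ρr z = ∫ y in (z-R)..(z+R), (z - y) * (ρ₂ y - ρ₁ y) := by
    unfold G
    have hInt2 : IntervalIntegrable (fun y => (z - y) * (ρ₂ y + M * ρr y)) volume (z-R) (z+R) :=
      ((hI2 _ _).add ((hIr _ _).const_mul M)).continuousOn_mul (by fun_prop)
    have hInt1 : IntervalIntegrable (fun y => (z - y) * (ρ₁ y + M * ρr y)) volume (z-R) (z+R) :=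
      ((hI1 _ _).add ((hIr _ _).const_mul M)).continuousOn_mul (by fun_prop)
    rw [← intervalIntegral.integral_sub hInt2 hInt1]
    congr 1
    funext y
    ring
  rw [hsub]
  have h1 := abs_kernel_integral_le hR.le z hIδ
  have h2 : (∫ y in (z-R)..(z+R), |ρ₂ y - ρ₁ y|) ≤ 2 * ∫ x in (0:ℝ)..1, |ρ₂ x - ρ₁ x| := by
    apply even_periodic_integral_le _ _ _ (fun a b => (hIδ a b).abs) (by linarith) (by linarith)
    · intro x; simp only [hρ₂.1 x, hρ₁.1 x]
    · intro x; simp only [hρ₂.2.1 x, hρ₁.2.1 x]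
    · intro x; exact abs_nonneg _
  calc |∫ y in (z-R)..(z+R), (z - y) * (ρ₂ y - ρ₁ y)|
      ≤ R * ∫ y in (z-R)..(z+R), |ρ₂ y - ρ₁ y| := h1
    _ ≤ R * (2 * ∫ x in (0:ℝ)..1, |ρ₂ x - ρ₁ x|) := mul_le_mul_of_nonneg_left h2 hR.le
    _ = 2 * R * ∫ x in (0:ℝ)..1, |ρ₂ x - ρ₁ x| := by ring

lemma exp_sub_exp_abs_le (s t : ℝ) {c : ℝ} (h : |s - t| ≤ c) :
    |Real.exp s - Real.exp t| ≤ (Real.exp c - 1) * Real.exp t := by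
  have hs : Real.exp s = Real.exp (s - t) * Real.exp t := by
    rw [← Real.exp_add]; ring_nf
  have hst : Real.exp (s - t) ≤ Real.exp c := Real.exp_le_exp.2 (le_trans (le_abs_self _) h)
  have h1 : Real.exp s - Real.exp t ≤ (Real.exp c - 1) * Real.exp t := by
    rw [hs]; nlinarith [Real.exp_pos t]
  have h2 : Real.exp t - Real.exp s ≤ (Real.exp c - 1) * Real.exp t := by
    have hd : -c ≤ s - t := by
      rcases abs_le.1 h with ⟨h', _⟩; linarith
    have e1 := Real.add_one_le_exp (s - t)
    have e2 := Real.add_one_le_exp c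
    have h2' : 2 ≤ Real.exp c + Real.exp (s - t) := by linarith
    rw [hs]; nlinarith [Real.exp_pos t]
  exact abs_sub_le_iff.2 ⟨h1, h2⟩

theorem stmt_11 (R M σ p : ℝ) (hR : 0 < R) (hR1 : R ≤ 1) (hM : 0 ≤ M)
    (hσ : 0 < σ) (hp : 1 ≤ p)
    (ρr : ℝ → ℝ) (hρr : IsEvenPeriodicDensity ρr)
    (ρ₁ ρ₂ : ℝ → ℝ)
    (hρ₁ : IsEvenPeriodicDensity ρ₁) (hρ₂ : IsEvenPeriodicDensity ρ₂)
    (hρ₁Lp : IntervalIntegrable (fun x => |ρ₁ x| ^ p) volume 0 1)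
    (hρ₂Lp : IntervalIntegrable (fun x => |ρ₂ x| ^ p) volume 0 1) :
    (∫ x in (0:ℝ)..1, |Tmap R M σ ρr ρ₂ x - Tmap R M σ ρr ρ₁ x| ^ p) ^ (1 / p)
      ≤ ((1 / 2) * Real.exp ((8 * R * (1 + M) / σ ^ 2) * (1 - 1 / p))
            * (Real.exp (16 * R / σ ^ 2) - 1))
        * (∫ x in (0:ℝ)..1, |ρ₂ x - ρ₁ x| ^ p) ^ (1 / p) := by
  have hp0 : (0:ℝ) < p := lt_of_lt_of_le one_pos hp
  have hσ2 : (0:ℝ) < σ ^ 2 := by positivity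
  have hI1 := epd_intervalIntegrable hρ₁
  have hI2 := epd_intervalIntegrable hρ₂
  have hIr := epd_intervalIntegrable hρr
  have hIh1 : ∀ a b : ℝ, IntervalIntegrable (fun y => ρ₁ y + M * ρr y) volume a b :=
    fun a b => (hI1 a b).add ((hIr a b).const_mul M)
  have hIh2 : ∀ a b : ℝ, IntervalIntegrable (fun y => ρ₂ y + M * ρr y) volume a b :=
    fun a b => (hI2 a b).add ((hIr a b).const_mul M)
  have hGc1 := G_continuous R M ρ₁ ρr hIh1
  have hGc2 := G_continuous R M ρ₂ ρr hIh2
  -- abbreviations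
  set u₁ : ℝ → ℝ := fun x => -(2 / σ ^ 2) * ∫ z in (0:ℝ)..x, G R M ρ₁ ρr z with hu₁
  set u₂ : ℝ → ℝ := fun x => -(2 / σ ^ 2) * ∫ z in (0:ℝ)..x, G R M ρ₂ ρr z with hu₂
  set K₁ : ℝ := ∫ y in (0:ℝ)..1, Real.exp (u₁ y) with hK₁
  set K₂ : ℝ := ∫ y in (0:ℝ)..1, Real.exp (u₂ y) with hK₂
  have hT1 : ∀ x, Tmap R M σ ρr ρ₁ x = Real.exp (u₁ x) / K₁ := fun x => rfl
  have hT2 : ∀ x, Tmap R M σ ρr ρ₂ x = Real.exp (u₂ x) / K₂ := fun x => rfl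
  have hu₁c : Continuous u₁ := by
    rw [hu₁]
    exact continuous_const.mul
      (intervalIntegral.continuous_primitive (fun a b => hGc1.intervalIntegrable a b) 0)
  have hu₂c : Continuous u₂ := by
    rw [hu₂]
    exact continuous_const.mul
      (intervalIntegral.continuous_primitive (fun a b => hGc2.intervalIntegrable a b) 0)
  have hφ₁c : Continuous (fun x => Real.exp (u₁ x)) := Real.continuous_exp.comp hu₁c
  have hφ₂c : Continuous (fun x => Real.exp (u₂ x)) := Real.continuous_exp.comp hu₂c
  set aa : ℝ := 4 * R * (1 + M) / σ ^ 2 with haa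
  have haa0 : 0 ≤ aa := by positivity
  -- bound on u₁, u₂
  have hu_bound : ∀ (ρ : ℝ → ℝ), IsEvenPeriodicDensity ρ → ∀ x ∈ Icc (0:ℝ) 1,
      |(-(2 / σ ^ 2) * ∫ z in (0:ℝ)..x, G R M ρ ρr z)| ≤ aa := by
    intro ρ hρ x hx
    have hb : ∀ z ∈ Set.uIoc (0:ℝ) x, ‖G R M ρ ρr z‖ ≤ 2 * R * (1 + M) := fun z _ => by
      rw [Real.norm_eq_abs]; exact G_abs_le hR hR1 hM hρ hρr z
    have hint := intervalIntegral.norm_integral_le_of_norm_le_const hb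
    rw [Real.norm_eq_abs] at hint
    have hxabs : |x - 0| ≤ 1 := by
      rw [abs_le]; constructor <;> [linarith [hx.1]; linarith [hx.2]]
    rw [abs_mul, abs_neg, abs_div]
    have h2 : |(2:ℝ)| / |σ ^ 2| = 2 / σ ^ 2 := by
      rw [abs_of_nonneg (by norm_num : (0:ℝ) ≤ 2), abs_of_pos hσ2]
    rw [h2]
    calc 2 / σ ^ 2 * |∫ z in (0:ℝ)..x, G R M ρ ρr z|
        ≤ 2 / σ ^ 2 * (2 * R * (1 + M) * |x - 0|) := by
          apply mul_le_mul_of_nonneg_left hint (by positivity)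
      _ ≤ 2 / σ ^ 2 * (2 * R * (1 + M) * 1) := by
          apply mul_le_mul_of_nonneg_left _ (by positivity)
          apply mul_le_mul_of_nonneg_left hxabs (by positivity)
      _ = aa := by rw [haa]; field_simp; ring
  have hu₁b : ∀ x ∈ Icc (0:ℝ) 1, |u₁ x| ≤ aa := fun x hx => hu_bound ρ₁ hρ₁ x hx
  have hu₂b : ∀ x ∈ Icc (0:ℝ) 1, |u₂ x| ≤ aa := fun x hx => hu_bound ρ₂ hρ₂ x hx
  -- D
  set D : ℝ := ∫ x in (0:ℝ)..1, |ρ₂ x - ρ₁ x| with hD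
  have hD0 : 0 ≤ D :=
    intervalIntegral.integral_nonneg (by norm_num) (fun x _ => abs_nonneg _)
  have hD2 : D ≤ 2 := by
    have hmono : (∫ x in (0:ℝ)..1, |ρ₂ x - ρ₁ x|) ≤ ∫ x in (0:ℝ)..1, (ρ₁ x + ρ₂ x) := by
      apply intervalIntegral.integral_mono_on (by norm_num)
        ((hI2 0 1).sub (hI1 0 1)).abs ((hI1 0 1).add (hI2 0 1))
      intro x _
      have h1 := abs_sub (ρ₂ x) (ρ₁ x)
      have := abs_of_nonneg (hρ₁.2.2.1 x)
      have := abs_of_nonneg (hρ₂.2.2.1 x)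
      calc |ρ₂ x - ρ₁ x| ≤ |ρ₂ x| + |ρ₁ x| := abs_sub _ _
        _ = ρ₁ x + ρ₂ x := by
            rw [abs_of_nonneg (hρ₂.2.2.1 x), abs_of_nonneg (hρ₁.2.2.1 x)]; ring
    rw [intervalIntegral.integral_add (hI1 0 1) (hI2 0 1), hρ₁.2.2.2, hρ₂.2.2.2] at hmono
    rw [hD]; linarith
  set cc : ℝ := 4 * R * D / σ ^ 2 with hcc
  have hcc0 : 0 ≤ cc := by positivity
  -- bound on u₂ - u₁
  have hud : ∀ x ∈ Icc (0:ℝ) 1, |u₂ x - u₁ x| ≤ cc := by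
    intro x hx
    have hsub : u₂ x - u₁ x
        = -(2 / σ ^ 2) * ∫ z in (0:ℝ)..x, (G R M ρ₂ ρr z - G R M ρ₁ ρr z) := by
      rw [hu₁, hu₂]
      rw [intervalIntegral.integral_sub (hGc2.intervalIntegrable 0 x)
        (hGc1.intervalIntegrable 0 x)]
      ring
    have hb : ∀ z ∈ Set.uIoc (0:ℝ) x, ‖G R M ρ₂ ρr z - G R M ρ₁ ρr z‖ ≤ 2 * R * D :=
      fun z _ => by
        rw [Real.norm_eq_abs]
        exact G_sub_abs_le hR hR1 hρ₁ hρ₂ hρr z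
    have hint := intervalIntegral.norm_integral_le_of_norm_le_const hb
    rw [Real.norm_eq_abs] at hint
    have hxabs : |x - 0| ≤ 1 := by
      rw [abs_le]; constructor <;> [linarith [hx.1]; linarith [hx.2]]
    rw [hsub, abs_mul, abs_neg, abs_div,
      abs_of_nonneg (by norm_num : (0:ℝ) ≤ 2), abs_of_pos hσ2]
    calc 2 / σ ^ 2 * |∫ z in (0:ℝ)..x, (G R M ρ₂ ρr z - G R M ρ₁ ρr z)|
        ≤ 2 / σ ^ 2 * (2 * R * D * |x - 0|) := by
          apply mul_le_mul_of_nonneg_left hint (by positivity)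
      _ ≤ 2 / σ ^ 2 * (2 * R * D * 1) := by
          apply mul_le_mul_of_nonneg_left _ (by positivity)
          apply mul_le_mul_of_nonneg_left hxabs (by positivity)
      _ = cc := by rw [hcc]; field_simp; ring
  -- K bounds
  have hK₁ge : Real.exp (-aa) ≤ K₁ := by
    have h := intervalIntegral.integral_mono_on (by norm_num : (0:ℝ) ≤ 1)
      (intervalIntegrable_const (μ := volume) (c := Real.exp (-aa))) (hφ₁c.intervalIntegrable 0 1)
      (fun x hx => Real.exp_le_exp.2 (by
        have := hu₁b x hx
        rcases abs_le.1 this with ⟨h', _⟩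
        linarith))
    simpa using h
  have hK₂ge : Real.exp (-aa) ≤ K₂ := by
    have h := intervalIntegral.integral_mono_on (by norm_num : (0:ℝ) ≤ 1)
      (intervalIntegrable_const (μ := volume) (c := Real.exp (-aa))) (hφ₂c.intervalIntegrable 0 1)
      (fun x hx => Real.exp_le_exp.2 (by
        have := hu₂b x hx
        rcases abs_le.1 this with ⟨h', _⟩
        linarith))
    simpa using h
  have hK₁pos : 0 < K₁ := lt_of_lt_of_le (Real.exp_pos _) hK₁ge
  have hK₂pos : 0 < K₂ := lt_of_lt_of_le (Real.exp_pos _) hK₂ge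
  have hT1pos : ∀ x, 0 < Tmap R M σ ρr ρ₁ x := fun x => by
    rw [hT1 x]; exact div_pos (Real.exp_pos _) hK₁pos
  have hT1le : ∀ x ∈ Icc (0:ℝ) 1, Tmap R M σ ρr ρ₁ x ≤ Real.exp (2 * aa) := by
    intro x hx
    rw [hT1 x]
    have hφle : Real.exp (u₁ x) ≤ Real.exp aa :=
      Real.exp_le_exp.2 (le_trans (le_abs_self _) (hu₁b x hx))
    calc Real.exp (u₁ x) / K₁ ≤ Real.exp aa / Real.exp (-aa) :=
          div_le_div₀ (Real.exp_nonneg _) hφle (Real.exp_pos _) hK₁ge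
      _ = Real.exp (2 * aa) := by rw [← Real.exp_sub]; ring_nf
  have hTint : (∫ x in (0:ℝ)..1, Tmap R M σ ρr ρ₁ x) = 1 := by
    simp only [hT1]
    rw [intervalIntegral.integral_div]
    exact div_self hK₁pos.ne'
  -- pointwise main bound
  set EE : ℝ := Real.exp (2 * cc) - 1 with hEE
  have hEE0 : 0 ≤ EE := by
    rw [hEE]
    have : (1:ℝ) = Real.exp 0 := (Real.exp_zero).symm
    nlinarith [Real.exp_le_exp.2 (by linarith : (0:ℝ) ≤ 2 * cc), Real.exp_zero]
  have hmain : ∀ x ∈ Icc (0:ℝ) 1,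
      |Tmap R M σ ρr ρ₂ x - Tmap R M σ ρr ρ₁ x| ≤ EE * Tmap R M σ ρr ρ₁ x := by
    intro x hx
    have hnum : Real.exp (u₂ x) * K₁ - Real.exp (u₁ x) * K₂
        = ∫ y in (0:ℝ)..1, (Real.exp (u₂ x) * Real.exp (u₁ y)
            - Real.exp (u₁ x) * Real.exp (u₂ y)) := by
      rw [intervalIntegral.integral_sub ((hφ₁c.intervalIntegrable 0 1).const_mul _)
        ((hφ₂c.intervalIntegrable 0 1).const_mul _),
        intervalIntegral.integral_const_mul, intervalIntegral.integral_const_mul]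
    have hptw : ∀ y ∈ Icc (0:ℝ) 1,
        |Real.exp (u₂ x) * Real.exp (u₁ y) - Real.exp (u₁ x) * Real.exp (u₂ y)|
          ≤ EE * (Real.exp (u₁ x) * Real.exp (u₂ y)) := by
      intro y hy
      rw [← Real.exp_add, ← Real.exp_add]
      have habs : |(u₂ x + u₁ y) - (u₁ x + u₂ y)| ≤ 2 * cc := by
        have h1 := hud x hx
        have h2 := hud y hy
        have e : (u₂ x + u₁ y) - (u₁ x + u₂ y) = (u₂ x - u₁ x) - (u₂ y - u₁ y) := by ring
        rw [e]
        calc |(u₂ x - u₁ x) - (u₂ y - u₁ y)| ≤ |u₂ x - u₁ x| + |u₂ y - u₁ y| := abs_sub _ _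
          _ ≤ 2 * cc := by linarith
      have := exp_sub_exp_abs_le (u₂ x + u₁ y) (u₁ x + u₂ y) habs
      rw [hEE]
      linarith [this]
    have hNle : |Real.exp (u₂ x) * K₁ - Real.exp (u₁ x) * K₂|
        ≤ EE * (Real.exp (u₁ x) * K₂) := by
      rw [hnum]
      have hi1 : IntervalIntegrable (fun y => |Real.exp (u₂ x) * Real.exp (u₁ y)
          - Real.exp (u₁ x) * Real.exp (u₂ y)|) volume 0 1 :=
        (((continuous_const.mul hφ₁c).sub (continuous_const.mul hφ₂c)).abs).intervalIntegrable 0 1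
      have hi2 : IntervalIntegrable (fun y => EE * (Real.exp (u₁ x) * Real.exp (u₂ y)))
          volume 0 1 :=
        (continuous_const.mul (continuous_const.mul hφ₂c)).intervalIntegrable 0 1
      calc |∫ y in (0:ℝ)..1, (Real.exp (u₂ x) * Real.exp (u₁ y)
              - Real.exp (u₁ x) * Real.exp (u₂ y))|
          ≤ ∫ y in (0:ℝ)..1, |Real.exp (u₂ x) * Real.exp (u₁ y)
              - Real.exp (u₁ x) * Real.exp (u₂ y)| :=
            intervalIntegral.abs_integral_le_integral_abs (by norm_num)
        _ ≤ ∫ y in (0:ℝ)..1, EE * (Real.exp (u₁ x) * Real.exp (u₂ y)) :=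
            intervalIntegral.integral_mono_on (by norm_num) hi1 hi2 hptw
        _ = EE * (Real.exp (u₁ x) * K₂) := by
            have e : (fun y => EE * (Real.exp (u₁ x) * Real.exp (u₂ y)))
                = fun y => (EE * Real.exp (u₁ x)) * Real.exp (u₂ y) := by
              funext y; ring
            rw [e, intervalIntegral.integral_const_mul, hK₂]
            ring
    have hTdiff : Tmap R M σ ρr ρ₂ x - Tmap R M σ ρr ρ₁ x
        = (Real.exp (u₂ x) * K₁ - Real.exp (u₁ x) * K₂) / (K₁ * K₂) := by
      rw [hT1 x, hT2 x]
      field_simp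
    rw [hTdiff, abs_div, abs_of_pos (mul_pos hK₁pos hK₂pos)]
    rw [div_le_iff₀ (mul_pos hK₁pos hK₂pos)]
    calc |Real.exp (u₂ x) * K₁ - Real.exp (u₁ x) * K₂|
        ≤ EE * (Real.exp (u₁ x) * K₂) := hNle
      _ = EE * Tmap R M σ ρr ρ₁ x * (K₁ * K₂) := by
          rw [hT1 x]; field_simp
  -- integral of |ΔT|^p
  have hTdc : Continuous (fun x => Tmap R M σ ρr ρ₂ x - Tmap R M σ ρr ρ₁ x) := by
    have e : (fun x => Tmap R M σ ρr ρ₂ x - Tmap R M σ ρr ρ₁ x)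
        = fun x => Real.exp (u₂ x) / K₂ - Real.exp (u₁ x) / K₁ := by
      funext x; rw [hT1 x, hT2 x]
    rw [e]
    exact (hφ₂c.div_const _).sub (hφ₁c.div_const _)
  have hT1c : Continuous (fun x => Tmap R M σ ρr ρ₁ x) := by
    have e : (fun x => Tmap R M σ ρr ρ₁ x) = fun x => Real.exp (u₁ x) / K₁ := by
      funext x; rw [hT1 x]
    rw [e]
    exact hφ₁c.div_const _
  have hL1 : (∫ x in (0:ℝ)..1, |Tmap R M σ ρr ρ₂ x - Tmap R M σ ρr ρ₁ x| ^ p)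
      ≤ EE ^ p * Real.exp (2 * aa * (p - 1)) := by
    have int1 : IntervalIntegrable
        (fun x => |Tmap R M σ ρr ρ₂ x - Tmap R M σ ρr ρ₁ x| ^ p) volume 0 1 :=
      ((hTdc.abs).rpow_const (fun x => Or.inr hp0.le)).intervalIntegrable 0 1
    have int2 : IntervalIntegrable
        (fun x => (EE * Tmap R M σ ρr ρ₁ x) ^ p) volume 0 1 :=
      (((continuous_const.mul hT1c)).rpow_const (fun x => Or.inr hp0.le)).intervalIntegrable 0 1
    have step1 : (∫ x in (0:ℝ)..1, |Tmap R M σ ρr ρ₂ x - Tmap R M σ ρr ρ₁ x| ^ p)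
        ≤ ∫ x in (0:ℝ)..1, (EE * Tmap R M σ ρr ρ₁ x) ^ p := by
      apply intervalIntegral.integral_mono_on (by norm_num) int1 int2
      intro x hx
      exact Real.rpow_le_rpow (abs_nonneg _) (hmain x hx) hp0.le
    have step2 : (∫ x in (0:ℝ)..1, (EE * Tmap R M σ ρr ρ₁ x) ^ p)
        = EE ^ p * ∫ x in (0:ℝ)..1, (Tmap R M σ ρr ρ₁ x) ^ p := by
      have e : (fun x => (EE * Tmap R M σ ρr ρ₁ x) ^ p)
          = fun x => EE ^ p * (Tmap R M σ ρr ρ₁ x) ^ p := by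
        funext x
        exact Real.mul_rpow hEE0 (hT1pos x).le
      rw [e, intervalIntegral.integral_const_mul]
    have step3 : (∫ x in (0:ℝ)..1, (Tmap R M σ ρr ρ₁ x) ^ p)
        ≤ Real.exp (2 * aa * (p - 1)) := by
      have ptw : ∀ x ∈ Icc (0:ℝ) 1,
          (Tmap R M σ ρr ρ₁ x) ^ p ≤ Real.exp (2 * aa * (p - 1)) * Tmap R M σ ρr ρ₁ x := by
        intro x hx
        have h1 : (Tmap R M σ ρr ρ₁ x) ^ p
            = (Tmap R M σ ρr ρ₁ x) ^ (p - 1) * Tmap R M σ ρr ρ₁ x := by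
          rw [show p = (p - 1) + 1 by ring, Real.rpow_add (hT1pos x), Real.rpow_one]
          ring_nf
        have h2 : (Tmap R M σ ρr ρ₁ x) ^ (p - 1) ≤ Real.exp (2 * aa * (p - 1)) := by
          calc (Tmap R M σ ρr ρ₁ x) ^ (p - 1)
              ≤ (Real.exp (2 * aa)) ^ (p - 1) :=
                Real.rpow_le_rpow (hT1pos x).le (hT1le x hx) (by linarith)
            _ = Real.exp (2 * aa * (p - 1)) := (Real.exp_mul _ _).symm
        rw [h1]
        exact mul_le_mul_of_nonneg_right h2 (hT1pos x).le
      have hintp : IntervalIntegrable (fun x => (Tmap R M σ ρr ρ₁ x) ^ p) volume 0 1 :=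
        (hT1c.rpow_const (fun x => Or.inr hp0.le)).intervalIntegrable 0 1
      have hintc : IntervalIntegrable
          (fun x => Real.exp (2 * aa * (p - 1)) * Tmap R M σ ρr ρ₁ x) volume 0 1 :=
        (continuous_const.mul hT1c).intervalIntegrable 0 1
      have := intervalIntegral.integral_mono_on (by norm_num) hintp hintc ptw
      rw [intervalIntegral.integral_const_mul, hTint, mul_one] at this
      exact this
    calc (∫ x in (0:ℝ)..1, |Tmap R M σ ρr ρ₂ x - Tmap R M σ ρr ρ₁ x| ^ p)
        ≤ ∫ x in (0:ℝ)..1, (EE * Tmap R M σ ρr ρ₁ x) ^ p := step1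
      _ = EE ^ p * ∫ x in (0:ℝ)..1, (Tmap R M σ ρr ρ₁ x) ^ p := step2
      _ ≤ EE ^ p * Real.exp (2 * aa * (p - 1)) :=
          mul_le_mul_of_nonneg_left step3 (Real.rpow_nonneg hEE0 p)
  -- take 1/p power
  have hL2 : (∫ x in (0:ℝ)..1, |Tmap R M σ ρr ρ₂ x - Tmap R M σ ρr ρ₁ x| ^ p) ^ (1 / p)
      ≤ EE * Real.exp ((8 * R * (1 + M) / σ ^ 2) * (1 - 1 / p)) := by
    have hint_nonneg : 0 ≤ ∫ x in (0:ℝ)..1, |Tmap R M σ ρr ρ₂ x - Tmap R M σ ρr ρ₁ x| ^ p :=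
      intervalIntegral.integral_nonneg (by norm_num)
        (fun x _ => Real.rpow_nonneg (abs_nonneg _) p)
    have h := Real.rpow_le_rpow hint_nonneg hL1 (by positivity : (0:ℝ) ≤ 1 / p)
    have e : (EE ^ p * Real.exp (2 * aa * (p - 1))) ^ (1 / p)
        = EE * Real.exp ((8 * R * (1 + M) / σ ^ 2) * (1 - 1 / p)) := by
      rw [Real.mul_rpow (Real.rpow_nonneg hEE0 p) (Real.exp_nonneg _),
        ← Real.rpow_mul hEE0, mul_one_div_cancel hp0.ne', Real.rpow_one,
        ← Real.exp_mul]
      congr 1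
      have hpne : p ≠ 0 := hp0.ne'
      have hfrac : (p - 1) * (1 / p) = 1 - 1 / p := by field_simp
      rw [haa]
      rw [show 2 * (4 * R * (1 + M) / σ ^ 2) * (p - 1) * (1 / p)
          = (8 * R * (1 + M) / σ ^ 2) * ((p - 1) * (1 / p)) by ring, hfrac]
    rw [e] at h
    exact h
  -- EE bound by convexity
  have hL3 : EE ≤ (D / 2) * (Real.exp (16 * R / σ ^ 2) - 1) := by
    have ht0 : (0:ℝ) ≤ D / 2 := by linarith
    have ht1 : D / 2 ≤ 1 := by linarith
    have hconv := convexOn_exp.2 (Set.mem_univ (16 * R / σ ^ 2)) (Set.mem_univ (0:ℝ))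
      ht0 (by linarith : (0:ℝ) ≤ 1 - D / 2) (by ring)
    simp only [smul_eq_mul, mul_zero, add_zero, Real.exp_zero, mul_one] at hconv
    have e2cc : 2 * cc = D / 2 * (16 * R / σ ^ 2) := by
      rw [hcc]; field_simp; ring
    rw [hEE, e2cc]
    linarith
  -- Jensen: D ≤ Lp norm
  have hL4 : D ≤ (∫ x in (0:ℝ)..1, |ρ₂ x - ρ₁ x| ^ p) ^ (1 / p) := by
    set μ : Measure ℝ := volume.restrict (Set.Ioc (0:ℝ) 1) with hμ
    haveI : IsProbabilityMeasure μ := by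
      constructor
      rw [hμ, Measure.restrict_apply_univ]
      simp [Real.volume_Ioc]
    have hfi : Integrable (fun x => |ρ₂ x - ρ₁ x|) μ := ((hI2 0 1).sub (hI1 0 1)).abs.1
    have hgi : Integrable (fun x => |ρ₂ x - ρ₁ x| ^ p) μ := by
      have hmeas : AEStronglyMeasurable (fun x => |ρ₂ x - ρ₁ x| ^ p) μ :=
        (Real.continuous_rpow_const (le_trans zero_le_one hp)).comp_aestronglyMeasurable
          (((hI2 0 1).sub (hI1 0 1)).abs.1.aestronglyMeasurable)
      have hg : Integrable (fun x => 2 ^ p * (|ρ₁ x| ^ p + |ρ₂ x| ^ p)) μ :=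
        (hρ₁Lp.1.add hρ₂Lp.1).const_mul _
      apply hg.mono hmeas
      apply Filter.Eventually.of_forall
      intro x
      rw [Real.norm_eq_abs, Real.norm_eq_abs,
        abs_of_nonneg (Real.rpow_nonneg (abs_nonneg _) p),
        abs_of_nonneg (mul_nonneg (Real.rpow_nonneg (by norm_num) p)
          (add_nonneg (Real.rpow_nonneg (abs_nonneg _) p)
            (Real.rpow_nonneg (abs_nonneg _) p)))]
      have hb : |ρ₂ x - ρ₁ x| ≤ 2 * max |ρ₁ x| |ρ₂ x| := by
        calc |ρ₂ x - ρ₁ x| ≤ |ρ₂ x| + |ρ₁ x| := abs_sub _ _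
          _ ≤ 2 * max |ρ₁ x| |ρ₂ x| := by
              rcases le_total |ρ₁ x| |ρ₂ x| with h | h
              · rw [max_eq_right h]; linarith
              · rw [max_eq_left h]; linarith
      calc |ρ₂ x - ρ₁ x| ^ p ≤ (2 * max |ρ₁ x| |ρ₂ x|) ^ p :=
            Real.rpow_le_rpow (abs_nonneg _) hb hp0.le
        _ = 2 ^ p * (max |ρ₁ x| |ρ₂ x|) ^ p :=
            Real.mul_rpow (by norm_num) (le_max_of_le_left (abs_nonneg _))
        _ ≤ 2 ^ p * (|ρ₁ x| ^ p + |ρ₂ x| ^ p) := by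
            apply mul_le_mul_of_nonneg_left _ (Real.rpow_nonneg (by norm_num) p)
            rcases le_total |ρ₁ x| |ρ₂ x| with h | h
            · rw [max_eq_right h]
              have := Real.rpow_nonneg (abs_nonneg (ρ₁ x)) p
              linarith
            · rw [max_eq_left h]
              have := Real.rpow_nonneg (abs_nonneg (ρ₂ x)) p
              linarith
    have hjen := (convexOn_rpow hp).map_integral_le
      (continuousOn_id.rpow_const (fun x _ => Or.inr (le_trans zero_le_one hp)))
      isClosed_Ici (Filter.Eventually.of_forall (fun x => abs_nonneg (ρ₂ x - ρ₁ x)))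
      hfi (by exact hgi)
    have hDeq : D = ∫ x, |ρ₂ x - ρ₁ x| ∂μ := by
      rw [hD, intervalIntegral.integral_of_le (by norm_num : (0:ℝ) ≤ 1)]
    have hPeq : (∫ x in (0:ℝ)..1, |ρ₂ x - ρ₁ x| ^ p) = ∫ x, |ρ₂ x - ρ₁ x| ^ p ∂μ := by
      rw [intervalIntegral.integral_of_le (by norm_num : (0:ℝ) ≤ 1)]
    have hDp : D ^ p ≤ ∫ x in (0:ℝ)..1, |ρ₂ x - ρ₁ x| ^ p := by
      rw [hDeq, hPeq]
      exact hjen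
    have hback : (D ^ p) ^ (1 / p) = D := by
      rw [← Real.rpow_mul hD0, mul_one_div_cancel hp0.ne', Real.rpow_one]
    calc D = (D ^ p) ^ (1 / p) := hback.symm
      _ ≤ (∫ x in (0:ℝ)..1, |ρ₂ x - ρ₁ x| ^ p) ^ (1 / p) :=
          Real.rpow_le_rpow (Real.rpow_nonneg hD0 p) hDp (by positivity)
  -- final chain
  have hs0 : (0:ℝ) ≤ 16 * R / σ ^ 2 := by positivity
  have hs1 : 0 ≤ Real.exp (16 * R / σ ^ 2) - 1 := by
    have := Real.one_le_exp hs0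
    linarith
  have hX0 : 0 ≤ Real.exp ((8 * R * (1 + M) / σ ^ 2) * (1 - 1 / p)) := Real.exp_nonneg _
  calc (∫ x in (0:ℝ)..1, |Tmap R M σ ρr ρ₂ x - Tmap R M σ ρr ρ₁ x| ^ p) ^ (1 / p)
      ≤ EE * Real.exp ((8 * R * (1 + M) / σ ^ 2) * (1 - 1 / p)) := hL2
    _ ≤ ((D / 2) * (Real.exp (16 * R / σ ^ 2) - 1))
          * Real.exp ((8 * R * (1 + M) / σ ^ 2) * (1 - 1 / p)) :=
        mul_le_mul_of_nonneg_right hL3 hX0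
    _ ≤ (((∫ x in (0:ℝ)..1, |ρ₂ x - ρ₁ x| ^ p) ^ (1 / p) / 2)
          * (Real.exp (16 * R / σ ^ 2) - 1))
          * Real.exp ((8 * R * (1 + M) / σ ^ 2) * (1 - 1 / p)) := by
        apply mul_le_mul_of_nonneg_right _ hX0
        apply mul_le_mul_of_nonneg_right _ hs1
        linarith
    _ = ((1 / 2) * Real.exp ((8 * R * (1 + M) / σ ^ 2) * (1 - 1 / p))
          * (Real.exp (16 * R / σ ^ 2) - 1))
          * (∫ x in (0:ℝ)..1, |ρ₂ x - ρ₁ x| ^ p) ^ (1 / p) := by ring
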